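/- Let ∗ ∈ {+, −, ×, ÷}, and let f, f′, g, g′ be AEs with f ≅ f′, g ≅ g′, 𝒱(f) ∩ 𝒱(g) = ∅, and 𝒱(f′) ∩ 𝒱(g′) = ∅. Then f ∗ g ≅ f′ ∗ g′. Consequently, the operation [f] ∗ [g] = [f′ ∗ g′] on isomorphism classes (where f′ ≅ f and g′ ≅ g are chosen with 𝒱(f′) ∩ 𝒱(g′) = ∅) is well-defined, and whenever f, g ∈ 𝒜 satisfy 𝒱(f) ∩ 𝒱(g) = ∅, one has [f ∗ g] = [f] ∗ [g]. -/

import Mathlib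

/- Common framework: `K = ℝ(x₁,x₂,…)` is the field of rational functions over `ℝ` in
countably many variables (the fraction field of `MvPolynomial ℕ ℝ`), arithmetic
expressions, the permutation action, isomorphism, types, the `EndsWith` classification,
multilinear forms and monicity, isomorphism classes and their counting. -/

open MvPolynomial

noncomputable section

abbrev P : Type := MvPolynomial ℕ ℝ
abbrev K : Type := FractionRing P

def toK : P →+* K := algebraMap P K

/-- The variable `xᵢ`, as an element of `K`. -/
def Xv (i : ℕ) : K := toK (X i)

/-- `Vars f` : the set of variables on which `f` depends, i.e. the variables occurring in a
representation of `f` as a quotient of two coprime polynomials. -/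
def Vars (f : K) : Set ℕ :=
  {i | ∃ p q : P, q ≠ 0 ∧ IsRelPrime p q ∧ f = toK p / toK q ∧ (i ∈ p.vars ∨ i ∈ q.vars)}

/-- `𝒜` : the smallest subset of `K` containing every variable and closed under the four
binary operations applied to expressions with disjoint variable sets. -/
inductive IsAE : K → Prop
  | var (i : ℕ) : IsAE (Xv i)
  | add {g h : K} : IsAE g → IsAE h → Disjoint (Vars g) (Vars h) → IsAE (g + h)
  | sub {g h : K} : IsAE g → IsAE h → Disjoint (Vars g) (Vars h) → IsAE (g - h)
  | mul {g h : K} : IsAE g → IsAE h → Disjoint (Vars g) (Vars h) → IsAE (g * h)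
  | div {g h : K} : IsAE g → IsAE h → Disjoint (Vars g) (Vars h) → IsAE (g / h)

/-- The action `σ·f` of a permutation of the variables on `K`, substituting `σ(xᵢ)` for `xᵢ`. -/
def permAct (σ : Equiv.Perm ℕ) : K ≃+* K :=
  IsFractionRing.ringEquivOfRingEquiv (renameEquiv ℝ σ).toRingEquiv

/-- `f ≅ g` : `f` and `g` are isomorphic, i.e. differ by a permutation of the variables. -/
def Iso (f g : K) : Prop := ∃ σ : Equiv.Perm ℕ, permAct σ f = g

/-- First type: `-f ∉ 𝒜`. -/
def FirstType (f : K) : Prop := IsAE f ∧ ¬ IsAE (-f)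

/-- Second type: `-f ∈ 𝒜` but `f ≇ -f`. -/
def SecondType (f : K) : Prop := IsAE f ∧ IsAE (-f) ∧ ¬ Iso f (-f)

/-- Third type: `-f ∈ 𝒜` and `f ≅ -f`. -/
def ThirdType (f : K) : Prop := IsAE f ∧ IsAE (-f) ∧ Iso f (-f)

/-- The four binary operators. -/
inductive Op : Type
  | add | sub | mul | div
deriving DecidableEq

/-- `EndsWith f o` : the arithmetic expression `f` ends with the operator `o`. -/
inductive EndsWith : K → Op → Prop
  | var (i : ℕ) : EndsWith (Xv i) Op.mul
  | add_base {i j : ℕ} (hij : i ≠ j) : EndsWith (Xv i + Xv j) Op.add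
  | sub_base {i j : ℕ} (hij : i ≠ j) : EndsWith (Xv i - Xv j) Op.sub
  | mul_base {i j : ℕ} (hij : i ≠ j) : EndsWith (Xv i * Xv j) Op.mul
  | div_base {i j : ℕ} (hij : i ≠ j) : EndsWith (Xv i / Xv j) Op.div
  | add_rec {g h : K} {o₁ o₂ : Op} : IsAE g → IsAE h → Disjoint (Vars g) (Vars h) →
      3 ≤ (Vars (g + h)).ncard → o₁ ≠ Op.sub → o₂ ≠ Op.sub →
      EndsWith g o₁ → EndsWith h o₂ → EndsWith (g + h) Op.add
  | mul_rec {g h : K} {o₁ o₂ : Op} : IsAE g → IsAE h → Disjoint (Vars g) (Vars h) →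
      3 ≤ (Vars (g * h)).ncard → o₁ ≠ Op.div → o₂ ≠ Op.div →
      EndsWith g o₁ → EndsWith h o₂ → EndsWith (g * h) Op.mul
  | div_rec {g h : K} {o₁ o₂ : Op} : IsAE g → IsAE h → Disjoint (Vars g) (Vars h) →
      3 ≤ (Vars (g / h)).ncard → o₁ ≠ Op.div → o₂ ≠ Op.div →
      EndsWith g o₁ → EndsWith h o₂ → EndsWith (g / h) Op.div
  | sub_rec {g h : K} {o₁ o₂ : Op} : IsAE g → IsAE h → Disjoint (Vars g) (Vars h) →
      3 ≤ (Vars (g - h)).ncard → o₁ ≠ Op.sub → o₂ ≠ Op.sub → FirstType h →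
      EndsWith g o₁ → EndsWith h o₂ → EndsWith (g - h) Op.sub

/-- `f` ends with one of the operators in `s`. -/
def EndsIn (f : K) (s : Set Op) : Prop := ∃ o ∈ s, EndsWith f o

/-- The binary operation on `K` corresponding to an operator. -/
def applyOp (o : Op) (a b : K) : K :=
  match o with
  | Op.add => a + b
  | Op.sub => a - b
  | Op.mul => a * b
  | Op.div => a / b

/-- The variable index set `{1, …, n}` (for the variables `x₁, …, xₙ`). -/
def varsUpTo (n : ℕ) : Set ℕ := {i | 1 ≤ i ∧ i ≤ n}

/-- `𝒜ₙ` : arithmetic expressions whose variable set is exactly `{x₁, …, xₙ}`. -/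
def AEn (n : ℕ) : Set K := {f | IsAE f ∧ Vars f = varsUpTo n}

/-- A multilinear polynomial: degree at most `1` in each variable. -/
def Multilinear (p : P) : Prop := ∀ i : ℕ, p.degreeOf i ≤ 1

/-- The key of a (multilinear) monomial: the sorted list of variables occurring in it;
keys are compared in the lexicographic order on lists. -/
def monKey (m : ℕ →₀ ℕ) : List ℕ := m.support.sort (· ≤ ·)

/-- A (multilinear) polynomial is monic if the coefficient of its lexicographically
leading (i.e. first) monomial is positive. -/
def MonicML (p : P) : Prop :=
  ∃ m ∈ p.support, 0 < p.coeff m ∧ ∀ m' ∈ p.support, monKey m ≤ monKey m'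

/-- `MLForm f F₁ F₂` : `F₁ / F₂` is the multilinear form of `f`: `F₁, F₂` are coprime
multilinear polynomials, `F₂` is monic, and `f = F₁ / F₂`. -/
def MLForm (f : K) (F₁ F₂ : P) : Prop :=
  Multilinear F₁ ∧ Multilinear F₂ ∧ IsRelPrime F₁ F₂ ∧ F₂ ≠ 0 ∧ MonicML F₂ ∧
    f = toK F₁ / toK F₂

/-- A monic arithmetic expression: the numerator of its multilinear form is monic as well. -/
def MonicAE (f : K) : Prop := ∃ F₁ F₂ : P, MLForm f F₁ F₂ ∧ MonicML F₁

/-- The isomorphism class of `f`. -/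
def classOf (f : K) : Set K := {g | Iso f g}

/-- `S̄` : the set of isomorphism classes of elements of `S`. -/
def classes (S : Set K) : Set (Set K) := classOf '' S

/-- `|S̄|` : the number of isomorphism classes of elements of `S`. -/
def countClasses (S : Set K) : ℕ := (classes S).ncard

/-- The number of isomorphism classes of elements of `S` depending on exactly `k` variables. -/
def gradeCount (S : Set K) (k : ℕ) : ℕ := countClasses {f ∈ S | (Vars f).ncard = k}

/-- `ω_n` for a graded family having `N k` elements in grade `k` : the sum over all
partitions `(k₁^{m₁},…,k_s^{m_s})` of `n` of `∏ⱼ C(N kⱼ + mⱼ - 1, mⱼ)`. -/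
def omega (N : ℕ → ℕ) (n : ℕ) : ℕ :=
  ∑ p : n.Partition,
    ∏ k ∈ p.parts.toFinset, Nat.choose (N k + p.parts.count k - 1) (p.parts.count k)

/-- `ω_n′` : the same sum restricted to non-trivial partitions, i.e. `ω_n - N n`. -/
def omega' (N : ℕ → ℕ) (n : ℕ) : ℕ := omega N n - N n

/-- `𝒜(s)` : arithmetic expressions ending with one of the operators in `s`. -/
def Aset (s : Set Op) : Set K := {f | IsAE f ∧ EndsIn f s}

/-- `ℱ(s)` : first-type arithmetic expressions ending with one of the operators in `s`. -/
def Fset (s : Set Op) : Set K := {f | FirstType f ∧ EndsIn f s}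

/-- `ℬ(s)` : second-type arithmetic expressions ending with one of the operators in `s`. -/
def Bset (s : Set Op) : Set K := {f | SecondType f ∧ EndsIn f s}

/-- `𝒞(s)` : third-type arithmetic expressions ending with one of the operators in `s`. -/
def Cset (s : Set Op) : Set K := {f | ThirdType f ∧ EndsIn f s}

/-- `ℳℬ(s)` : monic second-type arithmetic expressions ending with an operator in `s`. -/
def MBset (s : Set Op) : Set K := {f | SecondType f ∧ MonicAE f ∧ EndsIn f s}


/-
A permutation acts on `f` only through its values on the finite set `𝒱(f)`, and
`𝒱(σ·f) = σ(𝒱(f))`. So if `σ·f = f′` and `τ·g = g′`, where `𝒱(f), 𝒱(g)` are disjoint and so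
are `𝒱(f′), 𝒱(g′)`, then `σ` on `𝒱(f)` glued with `τ` on `𝒱(g)` is injective on a finite set
and extends to one permutation `π` with `π·f = f′` and `π·g = g′`; as `π` acts by a field
automorphism, `π·(f ∗ g) = f′ ∗ g′`. Finiteness of `𝒱(f)` comes from the uniqueness of reduced
fractions over the UFD `ℝ[x₁,x₂,…]` up to units, which are constants and carry no variables.
-/

namespace Set.Finite

variable {α : Type*}

theorem exists_perm_eqOn {s : Set α} (hs : s.Finite) {φ : α → α} (hφ : InjOn φ s) :
    ∃ π : Equiv.Perm α, EqOn π φ s := by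
  have := hs.to_subtype
  obtain ⟨π, hπ⟩ := Equiv.Perm.exists_extending_pair (Subtype.val : s → α) (fun x => φ x)
    Subtype.val_injective hφ.injective
  exact ⟨π, fun x hx => hπ ⟨x, hx⟩⟩

theorem exists_perm_eqOn_union {σ τ : Equiv.Perm α} {s t : Set α} (hs : s.Finite)
    (ht : t.Finite) (hst : Disjoint s t) (himage : Disjoint (σ '' s) (τ '' t)) :
    ∃ π : Equiv.Perm α, EqOn π σ s ∧ EqOn π τ t := by
  classical
  have hσ : EqOn (s.piecewise σ τ) σ s := s.piecewise_eqOn σ τ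
  have hτ : EqOn (s.piecewise σ τ) τ t :=
    (s.piecewise_eqOn_compl σ τ).mono hst.subset_compl_left
  have hinj : InjOn (s.piecewise σ τ) (s ∪ t) := by
    refine (injOn_union hst).2
      ⟨σ.injective.injOn.congr hσ.symm, τ.injective.injOn.congr hτ.symm, ?_⟩
    intro x hx y hy hxy
    rw [hσ hx, hτ hy] at hxy
    exact disjoint_left.1 himage ⟨x, hx, rfl⟩ ⟨y, hy, hxy.symm⟩
  obtain ⟨π, hπ⟩ := (hs.union ht).exists_perm_eqOn hinj
  exact ⟨π, (hπ.mono subset_union_left).trans hσ, (hπ.mono subset_union_right).trans hτ⟩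

theorem exists_perm_disjoint_image [Infinite α] {s t : Set α} (hs : s.Finite)
    (ht : t.Finite) : ∃ π : Equiv.Perm α, Disjoint s (π '' t) := by
  have := ht.to_subtype
  let e : t ↪ (sᶜ : Set α) := (Finite.equivFin t).toEmbedding.trans
    (Fin.valEmbedding.trans (Infinite.natEmbedding _ hs.infinite_compl))
  obtain ⟨π, hπ⟩ := Equiv.Perm.exists_extending_pair (Subtype.val : t → α)
    (fun x => (e x : α)) Subtype.val_injective (Subtype.val_injective.comp e.injective)
  refine ⟨π, disjoint_right.2 ?_⟩
  rintro _ ⟨x, hx, rfl⟩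
  exact (hπ ⟨x, hx⟩).symm ▸ (e ⟨x, hx⟩).2

end Set.Finite

theorem IsRelPrime.map_mulEquiv {α β : Type*} [CommMonoid α] [CommMonoid β] (e : α ≃* β)
    {x y : α} (h : IsRelPrime x y) : IsRelPrime (e x) (e y) := by
  intro d hx hy
  have := (h (by simpa using map_dvd e.symm hx) (by simpa using map_dvd e.symm hy)).map e
  rwa [MulEquiv.apply_symm_apply] at this

namespace MvPolynomial

variable {σ τ R : Type*}

theorem vars_rename_of_injective [CommSemiring R] [DecidableEq τ] {f : σ → τ}
    (hf : Function.Injective f) (p : MvPolynomial σ R) :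
    (rename f p).vars = p.vars.image f := by
  classical
  rw [vars_def, vars_def, degrees_rename_of_injective hf, Multiset.toFinset_map]

theorem rename_congr [CommSemiring R] {f g : σ → τ} {p : MvPolynomial σ R}
    (h : Set.EqOn f g p.vars) : rename f p = rename g p := by
  rw [rename_eq_aeval, rename_eq_aeval, aeval_eq_eval₂Hom, aeval_eq_eval₂Hom]
  exact eval₂Hom_congr' rfl (fun i hi _ => congrArg X (h hi)) rfl

end MvPolynomial

theorem Associated.vars_eq {σ R : Type*} [CommRing R] [IsDomain R] {p q : MvPolynomial σ R}
    (h : Associated p q) : p.vars = q.vars := by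
  obtain ⟨u, rfl⟩ := h
  obtain ⟨r, hr, hu⟩ := isUnit_iff_eq_C_of_isReduced.mp u.isUnit
  rw [hu, mul_comm, vars_C_mul _ hr.ne_zero]

theorem Vars_eq {f : K} {p q : P} (hq : q ≠ 0) (hpq : IsRelPrime p q)
    (hf : f = toK p / toK q) : Vars f = ↑p.vars ∪ ↑q.vars := by
  have vars_eq_num_den : ∀ {p q : P}, q ≠ 0 → IsRelPrime p q → f = toK p / toK q →
      p.vars = (IsFractionRing.num P f).vars ∧ q.vars = (IsFractionRing.den P f : P).vars := by
    intro p q hq hpq hf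
    obtain ⟨hp, hq⟩ := IsFractionRing.num_den_unique P f p
      ⟨q, mem_nonZeroDivisors_of_ne_zero hq⟩ hpq (by rw [IsFractionRing.mk'_eq_div, hf]; rfl)
    exact ⟨hp.symm.vars_eq, hq.symm.vars_eq⟩
  apply subset_antisymm
  · rintro i ⟨p', q', hq', hpq', hf', hi⟩
    rw [(vars_eq_num_den hq hpq hf).1, (vars_eq_num_den hq hpq hf).2]
    rwa [(vars_eq_num_den hq' hpq' hf').1, (vars_eq_num_den hq' hpq' hf').2] at hi
  · rintro i (hi | hi)
    exacts [⟨p, q, hq, hpq, hf, Or.inl hi⟩, ⟨p, q, hq, hpq, hf, Or.inr hi⟩]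

theorem exists_reduced_fraction (f : K) :
    ∃ p q : P, q ≠ 0 ∧ IsRelPrime p q ∧ f = toK p / toK q :=
  ⟨IsFractionRing.num P f, IsFractionRing.den P f, nonZeroDivisors.coe_ne_zero _,
    IsFractionRing.num_den_reduced P f, (IsFractionRing.mk'_num_den' P f).symm⟩

theorem finite_Vars (f : K) : (Vars f).Finite := by
  obtain ⟨p, q, hq, hpq, hf⟩ := exists_reduced_fraction f
  rw [Vars_eq hq hpq hf]
  exact p.vars.finite_toSet.union q.vars.finite_toSet

theorem permAct_toK (σ : Equiv.Perm ℕ) (p : P) : permAct σ (toK p) = toK (rename σ p) :=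
  IsFractionRing.ringEquivOfRingEquiv_algebraMap _ p

theorem permAct_div_toK (σ : Equiv.Perm ℕ) (p q : P) :
    permAct σ (toK p / toK q) = toK (rename σ p) / toK (rename σ q) := by
  rw [map_div₀, permAct_toK, permAct_toK]

theorem Vars_permAct (σ : Equiv.Perm ℕ) (f : K) : Vars (permAct σ f) = σ '' Vars f := by
  obtain ⟨p, q, hq, hpq, rfl⟩ := exists_reduced_fraction f
  have hq' : rename σ q ≠ 0 := (rename_injective _ σ.injective).ne_iff' (map_zero _) |>.2 hq
  have hpq' : IsRelPrime (rename σ p) (rename σ q) :=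
    hpq.map_mulEquiv (renameEquiv ℝ σ).toMulEquiv
  rw [Vars_eq hq hpq rfl, permAct_div_toK, Vars_eq hq' hpq' rfl,
    vars_rename_of_injective σ.injective, vars_rename_of_injective σ.injective,
    Finset.coe_image, Finset.coe_image, Set.image_union]

theorem permAct_congr {σ τ : Equiv.Perm ℕ} {f : K} (h : Set.EqOn σ τ (Vars f)) :
    permAct σ f = permAct τ f := by
  obtain ⟨p, q, hq, hpq, rfl⟩ := exists_reduced_fraction f
  rw [Vars_eq hq hpq rfl] at h
  rw [permAct_div_toK, permAct_div_toK, rename_congr (h.mono Set.subset_union_left),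
    rename_congr (h.mono Set.subset_union_right)]

theorem permAct_applyOp (σ : Equiv.Perm ℕ) (o : Op) (f g : K) :
    permAct σ (applyOp o f g) = applyOp o (permAct σ f) (permAct σ g) := by
  cases o <;> simp [applyOp]

theorem isAE_permAct (σ : Equiv.Perm ℕ) {f : K} (hf : IsAE f) : IsAE (permAct σ f) := by
  have hdisj : ∀ {g h : K}, Disjoint (Vars g) (Vars h) →
      Disjoint (Vars (permAct σ g)) (Vars (permAct σ h)) := fun hd => by
    rw [Vars_permAct, Vars_permAct]
    exact (Set.disjoint_image_iff σ.injective).2 hd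
  induction hf with
  | var i => rw [Xv, permAct_toK, rename_X]; exact IsAE.var _
  | add _ _ hd ihg ihh => rw [map_add]; exact ihg.add ihh (hdisj hd)
  | sub _ _ hd ihg ihh => rw [map_sub]; exact ihg.sub ihh (hdisj hd)
  | mul _ _ hd ihg ihh => rw [map_mul]; exact ihg.mul ihh (hdisj hd)
  | div _ _ hd ihg ihh => rw [map_div₀]; exact ihg.div ihh (hdisj hd)

theorem exists_permAct_eq_permAct_of_disjoint {f g : K} {σ τ : Equiv.Perm ℕ}
    (hfg : Disjoint (Vars f) (Vars g))
    (hfg' : Disjoint (Vars (permAct σ f)) (Vars (permAct τ g))) :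
    ∃ π : Equiv.Perm ℕ, permAct π f = permAct σ f ∧ permAct π g = permAct τ g := by
  rw [Vars_permAct, Vars_permAct] at hfg'
  obtain ⟨π, hπσ, hπτ⟩ :=
    (finite_Vars f).exists_perm_eqOn_union (finite_Vars g) hfg hfg'
  exact ⟨π, permAct_congr hπσ, permAct_congr hπτ⟩

theorem exists_permAct_disjoint_Vars (f g : K) :
    ∃ π : Equiv.Perm ℕ, Disjoint (Vars f) (Vars (permAct π g)) := by
  simpa only [Vars_permAct] using
    (finite_Vars f).exists_perm_disjoint_image (finite_Vars g)

/-- If `f ≅ f′`, `g ≅ g′`, `𝒱(f) ∩ 𝒱(g) = ∅` and `𝒱(f′) ∩ 𝒱(g′) = ∅`,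
then `f ∗ g ≅ f′ ∗ g′`; consequently the operation `[f] ∗ [g] := [f′ ∗ g′]` on
isomorphism classes (choosing representatives with disjoint variable sets, which always
exist) is well-defined, and `[f ∗ g] = [f] ∗ [g]` whenever `𝒱(f) ∩ 𝒱(g) = ∅`. -/
theorem class_operation_well_defined (o : Op) :
    (∀ f f' g g' : K, IsAE f → IsAE f' → IsAE g → IsAE g' →
      Iso f f' → Iso g g' →
      Disjoint (Vars f) (Vars g) → Disjoint (Vars f') (Vars g') →
      Iso (applyOp o f g) (applyOp o f' g')) ∧
    (∀ f g : K, IsAE f → IsAE g →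
      ∃ g' : K, IsAE g' ∧ Iso g g' ∧ Disjoint (Vars f) (Vars g')) := by
  constructor
  · rintro f _ g _ - - - - ⟨σ, rfl⟩ ⟨τ, rfl⟩ hfg hfg'
    obtain ⟨π, hπf, hπg⟩ := exists_permAct_eq_permAct_of_disjoint hfg hfg'
    exact ⟨π, by rw [permAct_applyOp, hπf, hπg]⟩
  · intro f g _ hg
    obtain ⟨π, hπ⟩ := exists_permAct_disjoint_Vars f g
    exact ⟨permAct π g, isAE_permAct π hg, ⟨π, rfl⟩, hπ⟩

end
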